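/- Every facially exposed closed convex cone K ⊆ ℝ³ is nice, i.e., for every face F of K, the set K* + F^⊥ is closed. -/

import Mathlib

open Pointwise RealInnerProductSpace

/-- `F` is a face of the cone `K`: a nonempty convex subset such that
`x + y ∈ F` with `x, y ∈ K` implies `x, y ∈ F`. -/
def IsFaceOfCone {E : Type*} [NormedAddCommGroup E] [InnerProductSpace ℝ E]
    (K F : Set E) : Prop :=
  F.Nonempty ∧ F ⊆ K ∧ Convex ℝ F ∧
    ∀ x y, x ∈ K → y ∈ K → x + y ∈ F → x ∈ F ∧ y ∈ F

/-- `F` is an exposed face of the cone `K`: `F = K ∩ H` for a supporting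
hyperplane `H` of `K` through the origin. -/
def IsExposedFaceOfCone {E : Type*} [NormedAddCommGroup E] [InnerProductSpace ℝ E]
    (K F : Set E) : Prop :=
  ∃ y : E, (∀ x ∈ K, ⟪y, x⟫ ≤ 0) ∧ F = {x ∈ K | ⟪y, x⟫ = 0}

open Module ProperCone

/-!
A face `F` of `K` is exposed, `F = K ∩ y^⊥` with `y ≤ 0` on `K`, and `K* + F^⊥` turns out to be the
dual cone `F*`, which is closed. Given `z ∈ F*`, we may project it onto `span F` and look for `t`
with `z + t y ∈ K*`. If `z` is strictly positive on `F \ {0}`, a compactness argument on the unit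
sphere provides `t`. Otherwise the face `F ∩ z^⊥` of `K` contains some `f₀ ≠ 0`; a vector `w`
exposing it is orthogonal to `f₀`, and as `f₀, z, y` are pairwise orthogonal in a 3-dimensional
space, `w = a z + b y` with `a < 0`, whence `z + (b / a) y = w / a ∈ K*`.
-/

section

variable {E : Type*} [NormedAddCommGroup E] [InnerProductSpace ℝ E]

theorem isFaceOfCone_setOf_inner_eq_zero {K : Set E} (hK : Convex ℝ K) (h0 : (0 : E) ∈ K)
    {y : E} (hy : ∀ x ∈ K, ⟪y, x⟫ ≤ 0) : IsFaceOfCone K {x ∈ K | ⟪y, x⟫ = 0} := by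
  refine ⟨⟨0, h0, inner_zero_right y⟩, Set.sep_subset _ _, ?_, ?_⟩
  · exact hK.inter (convex_hyperplane (innerSL ℝ y).isLinear 0)
  · intro a b ha hb hab
    have hsum : ⟪y, a⟫ + ⟪y, b⟫ = 0 := by rw [← inner_add_right]; exact hab.2
    have := hy a ha
    have := hy b hb
    exact ⟨⟨ha, by linarith⟩, ⟨hb, by linarith⟩⟩

theorem IsFaceOfCone.trans {K F G : Set E} (hF : IsFaceOfCone K F) (hG : IsFaceOfCone F G) :
    IsFaceOfCone K G := by
  obtain ⟨-, hFK, -, hF⟩ := hF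
  obtain ⟨hG0, hGF, hGc, hG⟩ := hG
  refine ⟨hG0, hGF.trans hFK, hGc, fun a b ha hb hab => ?_⟩
  obtain ⟨haF, hbF⟩ := hF a b ha hb (hGF hab)
  exact hG a b haF hbF hab

theorem mem_orthogonal_span_of_forall_inner_eq_zero {s : Set E} {v : E}
    (h : ∀ u ∈ s, ⟪u, v⟫ = 0) : v ∈ (Submodule.span ℝ s)ᗮ :=
  (Submodule.isOrtho_span.mpr fun u hu w hw => by rw [hw]; exact h u hu).symm
    (Submodule.mem_span_singleton_self v)

theorem exists_inner_pos_of_mem_span {s : Set E} {z : E} (hz : z ∈ Submodule.span ℝ s)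
    (hz0 : z ≠ 0) (hs : ∀ f ∈ s, 0 ≤ ⟪f, z⟫) : ∃ f ∈ s, 0 < ⟪f, z⟫ := by
  by_contra! h
  have hz' : z ∈ (Submodule.span ℝ s)ᗮ :=
    mem_orthogonal_span_of_forall_inner_eq_zero fun f hf => (h f hf).antisymm (hs f hf)
  exact hz0 (inner_self_eq_zero.mp (Submodule.inner_right_of_mem_orthogonal hz hz'))

theorem innerDual_add_orthogonal_subset [CompleteSpace E] {K F : Set E} (hFK : F ⊆ K) :
    (innerDual K : Set E) + (Submodule.span ℝ F)ᗮ ⊆ innerDual F := by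
  rintro _ ⟨k, hk, v, hv, rfl⟩
  rw [SetLike.mem_coe, mem_innerDual]
  intro f hf
  rw [inner_add_right, Submodule.inner_right_of_mem_orthogonal (Submodule.subset_span hf) hv,
    add_zero]
  exact hk (hFK hf)

theorem mem_innerDual_of_forall_norm_eq_one [CompleteSpace E] {K : ConvexCone ℝ E} {v : E}
    (h : ∀ u ∈ K, ‖u‖ = 1 → 0 ≤ ⟪u, v⟫) : v ∈ innerDual (K : Set E) := by
  rw [mem_innerDual]
  intro x hx
  rcases eq_or_ne x 0 with rfl | hx0
  · rw [inner_zero_left]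
  have hnorm : 0 < ‖x‖ := norm_pos_iff.mpr hx0
  have hu := h (‖x‖⁻¹ • x) (K.smul_mem (inv_pos.mpr hnorm) hx) (norm_smul_inv_norm hx0)
  rw [real_inner_smul_left] at hu
  exact nonneg_of_mul_nonneg_right hu (inv_pos.mpr hnorm)

variable [FiniteDimensional ℝ E]

theorem exists_sub_smul_mem_innerDual {K : ConvexCone ℝ E} (hK : IsClosed (K : Set E))
    {y z : E} (hy : ∀ x ∈ K, ⟪y, x⟫ ≤ 0) (hz : ∀ x ∈ K, x ≠ 0 → ⟪y, x⟫ = 0 → 0 < ⟪x, z⟫) :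
    ∃ t : ℝ, z - t • y ∈ innerDual (K : Set E) := by
  set C : Set E := (K : Set E) ∩ Metric.sphere 0 1 ∩ {u | ⟪u, z⟫ ≤ 0}
  have hC : IsCompact C :=
    ((isCompact_sphere 0 1).inter_left hK).inter_right
      (isClosed_le (continuous_id.inner continuous_const) continuous_const)
  have hyC : ∀ u ∈ C, 0 < -⟪y, u⟫ := by
    rintro u ⟨⟨huK, hu1⟩, huz⟩
    have hu0 : u ≠ 0 := ne_zero_of_mem_unit_sphere ⟨u, hu1⟩
    refine neg_pos.mpr ((hy u huK).lt_of_ne fun hyu => ?_)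
    exact (hz u huK hu0 hyu).not_ge huz
  obtain ⟨m, hm, hmC⟩ := hC.exists_forall_le' (by fun_prop) hyC
  refine ⟨‖z‖ / m, mem_innerDual_of_forall_norm_eq_one fun u huK hu1 => ?_⟩
  have ht : 0 ≤ ‖z‖ / m := div_nonneg (norm_nonneg z) hm.le
  have hyu : ⟪u, y⟫ ≤ 0 := real_inner_comm y u ▸ hy u huK
  rw [inner_sub_right, real_inner_smul_right]
  rcases lt_or_ge 0 ⟪u, z⟫ with huz | huz
  · nlinarith
  · have hmu : m ≤ -⟪u, y⟫ := real_inner_comm y u ▸ hmC u ⟨⟨huK, by simpa using hu1⟩, huz⟩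
    have hcs : -⟪u, z⟫ ≤ ‖z‖ := by
      simpa [hu1] using (neg_le_abs _).trans (abs_real_inner_le_norm u z)
    have : ‖z‖ / m * m = ‖z‖ := div_mul_cancel₀ _ hm.ne'
    nlinarith

theorem orthogonal_span_singleton_eq_span_pair (hE : finrank ℝ E = 3) {f z y : E}
    (hf : f ≠ 0) (hz : z ≠ 0) (hy : y ≠ 0)
    (hfz : ⟪f, z⟫ = 0) (hfy : ⟪f, y⟫ = 0) (hzy : ⟪z, y⟫ = 0) :
    (ℝ ∙ f)ᗮ = Submodule.span ℝ {z, y} := by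
  have hind : LinearIndependent ℝ ![z, y] :=
    linearIndependent_of_ne_zero_of_inner_eq_zero (by simp [Fin.forall_fin_two, hz, hy])
      (by intro i j hij; fin_cases i <;> fin_cases j <;> simp_all [real_inner_comm])
  have : Fact (finrank ℝ E = 2 + 1) := ⟨hE⟩
  refine (Submodule.eq_of_le_of_finrank_eq ?_ ?_).symm
  · rw [Submodule.span_le]
    rintro v (rfl | rfl)
    exacts [Submodule.mem_orthogonal_singleton_iff_inner_right.mpr hfz,
      Submodule.mem_orthogonal_singleton_iff_inner_right.mpr hfy]
  · rw [Submodule.finrank_orthogonal_span_singleton (n := 2) hf,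
      ← Matrix.range_cons_cons_empty z y ![], finrank_span_eq_card hind, Fintype.card_fin]

theorem exists_add_smul_mem_innerDual (hE : finrank ℝ E = 3) {K : ConvexCone ℝ E}
    (hK : IsClosed (K : Set E)) (h0 : (0 : E) ∈ K)
    (hexp : ∀ F, IsFaceOfCone (K : Set E) F → IsExposedFaceOfCone (K : Set E) F)
    {y z : E} (hy : ∀ x ∈ K, ⟪y, x⟫ ≤ 0) (hy0 : y ≠ 0)
    (hzV : z ∈ Submodule.span ℝ {x ∈ K | ⟪y, x⟫ = 0})
    (hzF : ∀ f ∈ {x ∈ K | ⟪y, x⟫ = 0}, 0 ≤ ⟪f, z⟫) :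
    ∃ t : ℝ, z + t • y ∈ innerDual (K : Set E) := by
  set F : Set E := {x ∈ K | ⟪y, x⟫ = 0}
  set Z : Set E := {x ∈ F | ⟪-z, x⟫ = 0}
  have hmemZ : ∀ x, x ∈ Z ↔ x ∈ F ∧ ⟪x, z⟫ = 0 := fun x => by
    simp only [Z, Set.mem_ofPred_eq, inner_neg_left, neg_eq_zero, real_inner_comm]
  have hF : IsFaceOfCone (K : Set E) F := isFaceOfCone_setOf_inner_eq_zero K.convex h0 hy
  have hZ : IsFaceOfCone (K : Set E) Z :=
    hF.trans <| isFaceOfCone_setOf_inner_eq_zero hF.2.2.1 ⟨h0, inner_zero_right y⟩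
      fun x hx => by rw [inner_neg_left, real_inner_comm, neg_nonpos]; exact hzF x hx
  obtain ⟨w, hw, hZw⟩ := hexp Z hZ
  by_cases hZ0 : ∀ x ∈ Z, x = 0
  · obtain ⟨t, ht⟩ := exists_sub_smul_mem_innerDual hK hy fun x hx hx0 hyx =>
      (hzF x ⟨hx, hyx⟩).lt_of_ne fun hxz => hx0 (hZ0 x ((hmemZ x).mpr ⟨⟨hx, hyx⟩, hxz.symm⟩))
    exact ⟨-t, by rwa [neg_smul, ← sub_eq_add_neg]⟩
  rcases eq_or_ne z 0 with rfl | hz0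
  · exact ⟨0, by simp⟩
  push Not at hZ0
  obtain ⟨f₀, hf₀Z, hf₀0⟩ := hZ0
  obtain ⟨⟨hf₀K, hyf₀⟩, hf₀z⟩ := (hmemZ f₀).mp hf₀Z
  obtain ⟨f₁, ⟨hf₁K, hyf₁⟩, hf₁z⟩ := exists_inner_pos_of_mem_span hzV hz0 hzF
  have hyV : y ∈ (Submodule.span ℝ F)ᗮ :=
    mem_orthogonal_span_of_forall_inner_eq_zero fun f hf => by rw [real_inner_comm]; exact hf.2
  have hwf₁ : ⟪w, f₁⟫ < 0 := by
    refine (hw f₁ hf₁K).lt_of_ne fun h => hf₁z.ne' ?_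
    exact ((hmemZ f₁).mp (hZw ▸ ⟨hf₁K, h⟩)).2
  have hwf₀ : w ∈ (ℝ ∙ f₀)ᗮ := by
    rw [Submodule.mem_orthogonal_singleton_iff_inner_right, real_inner_comm]
    exact (hZw ▸ hf₀Z : f₀ ∈ {x ∈ (K : Set E) | ⟪w, x⟫ = 0}).2
  rw [orthogonal_span_singleton_eq_span_pair hE hf₀0 hz0 hy0 hf₀z (by rwa [real_inner_comm])
    (Submodule.inner_right_of_mem_orthogonal hzV hyV)] at hwf₀
  obtain ⟨a, b, rfl⟩ := Submodule.mem_span_pair.mp hwf₀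
  have ha : a < 0 := by
    rw [inner_add_left, real_inner_smul_left, real_inner_smul_left, hyf₁, mul_zero, add_zero,
      real_inner_comm] at hwf₁
    exact neg_of_mul_neg_left hwf₁ hf₁z.le
  refine ⟨a⁻¹ * b, ?_⟩
  have hw' : z + (a⁻¹ * b) • y = a⁻¹ • (a • z + b • y) := by
    rw [smul_add, smul_smul, smul_smul, inv_mul_cancel₀ ha.ne, one_smul]
  rw [hw', mem_innerDual]
  intro x hx
  rw [real_inner_smul_right, real_inner_comm]
  exact mul_nonneg_of_nonpos_of_nonpos (inv_nonpos.mpr ha.le) (hw x hx)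

theorem innerDual_add_orthogonal_span_eq (hE : finrank ℝ E = 3) {K : ConvexCone ℝ E}
    (hK : IsClosed (K : Set E))
    (hexp : ∀ F, IsFaceOfCone (K : Set E) F → IsExposedFaceOfCone (K : Set E) F)
    {F : Set E} (hF : IsFaceOfCone (K : Set E) F) :
    (innerDual (K : Set E) : Set E) + (Submodule.span ℝ F)ᗮ = innerDual F := by
  refine (innerDual_add_orthogonal_subset hF.2.1).antisymm fun z hz => ?_
  have h0 : (0 : E) ∈ K := ConvexCone.Pointed.of_nonempty_of_isClosed (hF.1.mono hF.2.1) hK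
  obtain ⟨y, hy, rfl⟩ := hexp F hF
  rcases eq_or_ne y 0 with rfl | hy0
  · exact ⟨z, fun x hx => hz ⟨hx, inner_zero_left x⟩, 0, zero_mem _, add_zero z⟩
  set V := Submodule.span ℝ {x ∈ K | ⟪y, x⟫ = 0}
  have hzV : z - V.starProjection z ∈ Vᗮ := V.sub_starProjection_mem_orthogonal z
  have hyV : y ∈ Vᗮ :=
    mem_orthogonal_span_of_forall_inner_eq_zero fun f hf => by rw [real_inner_comm]; exact hf.2
  obtain ⟨t, ht⟩ := exists_add_smul_mem_innerDual hE hK h0 hexp hy hy0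
    (V.starProjection_apply_mem z) fun f hf => by
      have hfz := Submodule.inner_right_of_mem_orthogonal (Submodule.subset_span hf) hzV
      rw [inner_sub_right, sub_eq_zero] at hfz
      exact hfz ▸ hz hf
  exact ⟨_, ht, (z - V.starProjection z) - t • y, sub_mem hzV (Submodule.smul_mem _ _ hyV),
    by simp⟩

end

theorem stmt_3 (K : ConvexCone ℝ (EuclideanSpace ℝ (Fin 3)))
    (hK : IsClosed (K : Set (EuclideanSpace ℝ (Fin 3))))
    (hexp : ∀ F, IsFaceOfCone (K : Set (EuclideanSpace ℝ (Fin 3))) F →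
      IsExposedFaceOfCone (K : Set (EuclideanSpace ℝ (Fin 3))) F)
    (F : Set (EuclideanSpace ℝ (Fin 3)))
    (hF : IsFaceOfCone (K : Set (EuclideanSpace ℝ (Fin 3))) F) :
    IsClosed ({y : EuclideanSpace ℝ (Fin 3) | ∀ x ∈ K, 0 ≤ ⟪x, y⟫} +
      ((Submodule.span ℝ F)ᗮ : Set (EuclideanSpace ℝ (Fin 3)))) := by
  have hclosed := (innerDual F).isClosed
  rw [← innerDual_add_orthogonal_span_eq finrank_euclideanSpace_fin hK hexp hF] at hclosed
  exact hclosed
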